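/- arXiv:2409.01050 — 7 statements merged into one kernel-verified Lean document; each statement's English description precedes it below -/
import Mathlib

section
/- Let U be a finite abelian group and ρ : U → GL(3, ℂ) a faithful (injective) representation such that for every non-trivial element u ∈ U, the number 1 is not an eigenvalue of the matrix ρ(u). Then U is cyclic. -/
open Matrix Polynomial

/-- An abelian finite group with a faithful 3-dimensional complex
representation in which no non-trivial element has eigenvalue `1` is cyclic. -/
theorem rigid_torus_quotient_stmt0 (U : Type*) [CommGroup U] [Finite U]
    (ρ : U →* Matrix.GeneralLinearGroup (Fin 3) ℂ)
    (hinj : Function.Injective ρ)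
    (heig : ∀ u : U, u ≠ 1 → ¬ ((ρ u : Matrix (Fin 3) (Fin 3) ℂ).charpoly.IsRoot 1)) :
    IsCyclic U := by
  classical
  let f : U → Module.End ℂ (Fin 3 → ℂ) :=
    fun u => Matrix.toLin' (ρ u : Matrix (Fin 3) (Fin 3) ℂ)
  have hf_mul : ∀ a b : U, f (a * b) = f a * f b := by
    intro a b
    show Matrix.toLin' _ = _
    rw [_root_.map_mul ρ, Units.val_mul, Matrix.toLin'_mul]
    rfl
  have hcomm : Pairwise fun i j => Commute (f i) (f j) := by
    intro i j _
    show f i * f j = f j * f i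
    rw [← hf_mul, ← hf_mul, mul_comm]
  have htri : ∀ u, ⨆ μ, (f u).maxGenEigenspace μ = ⊤ := fun u =>
    Module.End.iSup_maxGenEigenspace_eq_top (f u)
  have hsup :=
    Module.End.iSup_iInf_maxGenEigenspace_eq_top_of_iSup_maxGenEigenspace_eq_top_of_commute
      f hcomm htri
  have hex : ∃ χ : U → ℂ, (⨅ u, (f u).maxGenEigenspace (χ u)) ≠ ⊥ := by
    by_contra h
    push_neg at h
    simp only [h, iSup_bot] at hsup
    exact absurd hsup (by simp)
  obtain ⟨χ, hχ⟩ := hex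
  obtain ⟨v₀, hv₀mem, hv₀⟩ := Submodule.ne_bot_iff _ |>.mp hχ
  -- each `f u` is semisimple
  have hss : ∀ u, (f u).IsFinitelySemisimple := by
    intro u
    have hord : orderOf u ≠ 0 := by
      have : IsOfFinOrder u := isOfFinOrder_of_finite u
      exact this.orderOf_pos.ne'
    have hpow : f u ^ orderOf u = 1 := by
      have : f (u ^ orderOf u) = f 1 := by rw [pow_orderOf_eq_one]
      have h1 : f 1 = 1 := by
        show Matrix.toLin' _ = _
        rw [_root_.map_one ρ, Units.val_one, Matrix.toLin'_one]; rfl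
      have hp : f (u ^ orderOf u) = f u ^ orderOf u := by
        induction orderOf u with
        | zero => simpa using h1
        | succ n ih => rw [pow_succ, pow_succ, hf_mul, ih]
      rw [← hp, this, h1]
    have hsq : Squarefree (X ^ orderOf u - 1 : ℂ[X]) := by
      refine (Polynomial.X_pow_sub_one_separable_iff.mpr ?_).squarefree
      exact_mod_cast Nat.cast_ne_zero.mpr hord
    have haev : Polynomial.aeval (f u) (X ^ orderOf u - 1 : ℂ[X]) = 0 := by
      simp [hpow]
    exact (Module.End.isSemisimple_of_squarefree_aeval_eq_zero hsq haev).isFinitelySemisimple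
  -- v₀ is a genuine common eigenvector
  have hv : ∀ u, f u v₀ = χ u • v₀ := by
    intro u
    have h1 : v₀ ∈ (f u).maxGenEigenspace (χ u) := by
      exact (Submodule.mem_iInf _).mp hv₀mem u
    rw [(hss u).maxGenEigenspace_eq_eigenspace] at h1
    exact Module.End.mem_eigenspace_iff.mp h1
  have hone : χ 1 = 1 := by
    have h1 : f 1 = 1 := by
      show Matrix.toLin' _ = _
      rw [_root_.map_one ρ, Units.val_one, Matrix.toLin'_one]; rfl
    have := hv 1
    rw [h1] at this
    have : (1 : ℂ) • v₀ = χ 1 • v₀ := by simpa using this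
    exact (smul_left_injective ℂ hv₀ this).symm
  have hmul : ∀ a b : U, χ (a * b) = χ a * χ b := by
    intro a b
    have h1 : f (a * b) v₀ = χ (a * b) • v₀ := hv (a * b)
    have h2 : f (a * b) v₀ = (χ a * χ b) • v₀ := by
      rw [hf_mul]
      show f a (f b v₀) = _
      rw [hv b, LinearMap.map_smul, hv a, smul_smul, mul_comm]
    exact smul_left_injective ℂ hv₀ (h1.symm.trans h2)
  have hunit : ∀ u : U, χ u * χ u⁻¹ = 1 := by
    intro u
    rw [← hmul, mul_inv_cancel, hone]
  let χ' : U →* ℂˣ :=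
    { toFun := fun u => ⟨χ u, χ u⁻¹, hunit u, by rw [mul_comm]; exact hunit u⟩
      map_one' := by ext; exact hone
      map_mul' := fun a b => by ext; exact hmul a b }
  -- χ u is a root of the charpoly of ρ u
  have hroot : ∀ u : U, (ρ u : Matrix (Fin 3) (Fin 3) ℂ).charpoly.IsRoot (χ u) := by
    intro u
    have hev : (f u).HasEigenvalue (χ u) :=
      Module.End.hasEigenvalue_of_hasEigenvector
        ⟨Module.End.mem_eigenspace_iff.mpr (hv u), hv₀⟩
    have hmin : (minpoly ℂ (f u)).IsRoot (χ u) :=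
      Module.End.hasEigenvalue_iff_isRoot.mp hev
    rw [show minpoly ℂ (f u) = minpoly ℂ (ρ u : Matrix (Fin 3) (Fin 3) ℂ) from
      Matrix.minpoly_toLin' _] at hmin
    have hdvd : minpoly ℂ (ρ u : Matrix (Fin 3) (Fin 3) ℂ) ∣
        (ρ u : Matrix (Fin 3) (Fin 3) ℂ).charpoly :=
      minpoly.dvd ℂ _ (Matrix.aeval_self_charpoly _)
    exact hmin.dvd hdvd
  have hχ'inj : Function.Injective χ' := by
    rw [injective_iff_map_eq_one]
    intro a ha
    by_contra hne
    apply heig a hne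
    have : χ a = 1 := by
      have := congrArg Units.val ha
      exact this
    rw [← this]
    exact hroot a
  exact isCyclic_of_subgroup_isDomain ((Units.coeHom ℂ).comp χ')
    (fun a b hab => hχ'inj (Units.ext hab))
end

section
/- Let A ∈ GL(3, ℂ) be a matrix of finite order d > 1 such that the characteristic polynomial of A ⊕ Ā has integer coefficients. If 1 is an eigenvalue of A, then d ∈ {2, 3, 4, 5, 6, 8, 10, 12}. -/
open Matrix Polynomial

lemma tot_dvd_120 {n : ℕ} (hn : 0 < n) (h : n.totient ≤ 5) : n ∣ 120 := by
  have key : ∀ m : ℕ, m ∣ n → m.totient ≤ 5 := fun m hm =>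
    le_trans (Nat.le_of_dvd (Nat.totient_pos.2 hn) (Nat.totient_dvd_of_dvd hm)) h
  have hn0 : n ≠ 0 := hn.ne'
  rw [← Nat.factorization_le_iff_dvd hn0 (by norm_num)]
  intro p
  by_cases hp : p.Prime
  · have hcap : ∀ k : ℕ, 5 < Nat.totient (p ^ k) → k ≤ n.factorization p → False := by
      intro k hk hle
      have hdvd : p ^ k ∣ n := (Nat.Prime.pow_dvd_iff_le_factorization hp hn0).mpr hle
      exact absurd (key _ hdvd) (by omega)
    rcases (show p = 2 ∨ p = 3 ∨ p = 5 ∨ (p ≠ 2 ∧ p ≠ 3 ∧ p ≠ 5) by tauto) with h2 | h3 | h5 | hother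
    · subst h2
      have h120 : 3 ≤ (120:ℕ).factorization 2 :=
        (Nat.Prime.pow_dvd_iff_le_factorization Nat.prime_two (by norm_num)).mp (by norm_num)
      have hcap4 : n.factorization 2 ≤ 3 := by
        by_contra hc
        exact hcap 4 (by decide) (by omega)
      omega
    · subst h3
      have h120 : 1 ≤ (120:ℕ).factorization 3 :=
        (Nat.Prime.pow_dvd_iff_le_factorization Nat.prime_three (by norm_num)).mp (by norm_num)
      have hcap2 : n.factorization 3 ≤ 1 := by
        by_contra hc
        exact hcap 2 (by decide) (by omega)
      omega
    · subst h5
      have h120 : 1 ≤ (120:ℕ).factorization 5 :=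
        (Nat.Prime.pow_dvd_iff_le_factorization (by norm_num) (by norm_num)).mp (by norm_num)
      have hcap2 : n.factorization 5 ≤ 1 := by
        by_contra hc
        exact hcap 2 (by decide) (by omega)
      omega
    · have : n.factorization p = 0 := by
        by_contra hc
        have h1 : p ∣ n := Nat.dvd_of_factorization_pos hc
        have hp5 := key p h1
        rw [Nat.totient_prime hp] at hp5
        have h2 := hp.two_le
        have hp6 : p ≤ 6 := by omega
        interval_cases p <;> first | (exact absurd hp (by decide)) | simp_all
      simp [this]
  · simp [Nat.factorization_eq_zero_of_not_prime _ hp]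

lemma final_arith : ∀ a ∈ Nat.divisors 120, ∀ b ∈ Nat.divisors 120, 1 < Nat.lcm a b →
    ((a = b ∧ a.totient ≤ 5) ∨ (a = 1 ∧ b.totient ≤ 5) ∨ (b = 1 ∧ a.totient ≤ 5) ∨
      (a.totient + b.totient ≤ 5)) →
    Nat.lcm a b = 2 ∨ Nat.lcm a b = 3 ∨ Nat.lcm a b = 4 ∨ Nat.lcm a b = 5 ∨
      Nat.lcm a b = 6 ∨ Nat.lcm a b = 8 ∨ Nat.lcm a b = 10 ∨ Nat.lcm a b = 12 := by
  decide

lemma charmatrix_eval {n : Type*} [Fintype n] [DecidableEq n] (M : Matrix n n ℂ) (ρ : ℂ) :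
    (charmatrix M).map (evalRingHom ρ) = ρ • (1 : Matrix n n ℂ) - M := by
  ext i j
  by_cases h : i = j
  · subst h
    simp [charmatrix_apply_eq]
  · simp [charmatrix_apply_ne _ _ _ h, Matrix.one_apply_ne h]

lemma root_pow_eq_one {n : Type*} [Fintype n] [DecidableEq n] {M : Matrix n n ℂ} {d : ℕ}
    (hM : M ^ d = 1) {ρ : ℂ} (hρ : M.charpoly.IsRoot ρ) : ρ ^ d = 1 := by
  have hdet : (ρ • (1 : Matrix n n ℂ) - M).det = 0 := by
    have h0 : (evalRingHom ρ) M.charpoly = 0 := hρ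
    rw [Matrix.charpoly, RingHom.map_det, RingHom.mapMatrix_apply, charmatrix_eval] at h0
    exact h0
  obtain ⟨v, hv0, hv⟩ := (Matrix.exists_mulVec_eq_zero_iff).mpr hdet
  have hMv : M.mulVec v = ρ • v := by
    rw [Matrix.sub_mulVec, Matrix.smul_mulVec, Matrix.one_mulVec, sub_eq_zero] at hv
    exact hv.symm
  have hpow : ∀ k : ℕ, (M ^ k).mulVec v = ρ ^ k • v := by
    intro k
    induction k with
    | zero => simp
    | succ k ih =>
        rw [pow_succ, ← Matrix.mulVec_mulVec, hMv, Matrix.mulVec_smul, ih, pow_succ,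
          smul_smul, mul_comm]
  have hvd : v = ρ ^ d • v := by
    have := hpow d
    rwa [hM, Matrix.one_mulVec] at this
  obtain ⟨i, hi⟩ := Function.ne_iff.mp hv0
  have : v i = ρ ^ d * v i := by
    conv_lhs => rw [hvd]
    rfl
  exact mul_right_cancel₀ (by simpa using hi)
    (by rw [← this, one_mul] : ρ ^ d * v i = 1 * v i)

lemma pow_eq_one_of_roots {k : Type*} [Fintype k] [DecidableEq k] [Nonempty k]
    {M : Matrix k k ℂ} {d m : ℕ} (hd : 0 < d) (hm : 0 < m) (hM : M ^ d = 1)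
    (hroots : ∀ ρ : ℂ, M.charpoly.IsRoot ρ → ρ ^ m = 1) : M ^ m = 1 := by
  have hint : IsIntegral ℂ M := Algebra.IsIntegral.isIntegral M
  have hann : (aeval M) (X ^ d - 1 : ℂ[X]) = 0 := by
    simp [hM]
  have hdvd1 : minpoly ℂ M ∣ X ^ d - 1 := minpoly.dvd ℂ M hann
  have hXd : (X ^ d - 1 : ℂ[X]).Separable := by
    have := Polynomial.separable_X_pow_sub_C (F := ℂ) (n := d) 1
      (by exact_mod_cast Nat.cast_ne_zero.mpr hd.ne') one_ne_zero
    simpa using this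
  have hsep : (minpoly ℂ M).Separable := hXd.of_dvd hdvd1
  have hmonic : (minpoly ℂ M).Monic := minpoly.monic hint
  have heq : minpoly ℂ M = ((minpoly ℂ M).roots.map fun a => X - C a).prod :=
    (IsAlgClosed.splits _).eq_prod_roots_of_monic hmonic
  have hXm0 : (X ^ m - 1 : ℂ[X]) ≠ 0 := by
    have : ((X ^ m - 1 : ℂ[X])).natDegree = m := by
      rw [show (1 : ℂ[X]) = C 1 by simp, natDegree_X_pow_sub_C]
    intro h
    rw [h] at this
    simp at this
    omega
  have hsub : (minpoly ℂ M).roots ≤ (X ^ m - 1 : ℂ[X]).roots := by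
    rw [Multiset.le_iff_subset (nodup_roots hsep)]
    intro r hr
    have hrmp : (minpoly ℂ M).IsRoot r := isRoot_of_mem_roots hr
    have hcp : M.charpoly.IsRoot r := by
      obtain ⟨q, hq⟩ := Matrix.minpoly_dvd_charpoly M
      rw [hq]
      simp [IsRoot.def, hrmp.eq_zero]
    have : r ^ m = 1 := hroots r hcp
    rw [mem_roots hXm0]
    simp [IsRoot.def, this]
  have hdvd2 : minpoly ℂ M ∣ X ^ m - 1 := by
    rw [heq]
    exact (Multiset.prod_X_sub_C_dvd_iff_le_roots hXm0 _).mpr hsub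
  obtain ⟨q, hq⟩ := hdvd2
  have : (aeval M) (X ^ m - 1 : ℂ[X]) = 0 := by
    rw [hq, _root_.map_mul, minpoly.aeval, zero_mul]
  have h2 : M ^ m - 1 = 0 := by simpa using this
  rw [sub_eq_zero] at h2
  exact h2

/-- The characteristic polynomial of the block-diagonal matrix `A ⊕ Ā` is the image of
a monic integer polynomial. -/
def HasIntegralCharPolyWithConj (A : Matrix (Fin 3) (Fin 3) ℂ) : Prop :=
  ∃ p : Polynomial ℤ, p.Monic ∧ p.map (Int.castRingHom ℂ) =
    (Matrix.fromBlocks A 0 0 (A.map (starRingEnd ℂ))).charpoly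

/-- If `A ∈ GL(3,ℂ)` has finite order `d > 1`, the characteristic
polynomial of `A ⊕ Ā` has integer coefficients, and `1` is an eigenvalue of `A`,
then `d ∈ {2,3,4,5,6,8,10,12}`. -/
theorem rigid_torus_quotient_stmt1 (A : Matrix.GeneralLinearGroup (Fin 3) ℂ) (d : ℕ)
    (hd : orderOf A = d) (hd1 : 1 < d)
    (hint : HasIntegralCharPolyWithConj (A : Matrix (Fin 3) (Fin 3) ℂ))
    (h1 : (A : Matrix (Fin 3) (Fin 3) ℂ).charpoly.IsRoot 1) :
    d ∈ ({2, 3, 4, 5, 6, 8, 10, 12} : Set ℕ) := by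
  obtain ⟨p, hpm, hpc⟩ := hint
  set M : Matrix (Fin 3) (Fin 3) ℂ := (A : Matrix (Fin 3) (Fin 3) ℂ) with hMdef
  have hd0 : 0 < d := by omega
  -- M ^ d = 1
  have hMd : M ^ d = 1 := by
    have hA : A ^ d = 1 := hd ▸ pow_orderOf_eq_one A
    have := congrArg (fun B : Matrix.GeneralLinearGroup (Fin 3) ℂ =>
      (B : Matrix (Fin 3) (Fin 3) ℂ)) hA
    simpa [Units.val_pow_eq_pow_val] using this
  -- the rational polynomial
  set q : Polynomial ℚ := p.map (Int.castRingHom ℚ) with hqdef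
  have hqm : q.Monic := hpm.map _
  have hq0 : q ≠ 0 := hqm.ne_zero
  have hmapq : q.map (algebraMap ℚ ℂ) = p.map (Int.castRingHom ℂ) := by
    rw [hqdef, Polynomial.map_map]
    congr 1
  have hqdeg : q.natDegree = 6 := by
    have h1' : (p.map (Int.castRingHom ℂ)).natDegree = 6 := by
      rw [hpc, Matrix.charpoly_natDegree_eq_dim]
      simp
    have h2' : (p.map (Int.castRingHom ℂ)).natDegree = p.natDegree :=
      hpm.natDegree_map _
    have h3' : q.natDegree = p.natDegree := hpm.natDegree_map _
    omega
  -- roots of the charpoly of M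
  have hMc0 : M.charpoly ≠ 0 := (Matrix.charpoly_monic M).ne_zero
  have hcard : Multiset.card M.charpoly.roots = 3 := by
    have := (Polynomial.splits_iff_card_roots (f := M.charpoly)).mp
      (IsAlgClosed.splits M.charpoly)
    rw [this, Matrix.charpoly_natDegree_eq_dim]
    simp
  have h1mem : (1 : ℂ) ∈ M.charpoly.roots := (mem_roots hMc0).mpr h1
  obtain ⟨s, hs⟩ := Multiset.exists_cons_of_mem h1mem
  have hscard : Multiset.card s = 2 := by
    rw [hs] at hcard
    simpa using hcard
  obtain ⟨lam, mu, hlm⟩ := Multiset.card_eq_two.mp hscard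
  have hroots_eq : M.charpoly.roots = (1 : ℂ) ::ₘ lam ::ₘ {mu} := by
    rw [hs, hlm]
    rfl
  have hlam : M.charpoly.IsRoot lam := isRoot_of_mem_roots (by rw [hroots_eq]; simp)
  have hmu : M.charpoly.IsRoot mu := isRoot_of_mem_roots (by rw [hroots_eq]; simp)
  have hclass : ∀ ρ : ℂ, M.charpoly.IsRoot ρ → ρ = 1 ∨ ρ = lam ∨ ρ = mu := by
    intro ρ hρ
    have : ρ ∈ M.charpoly.roots := (mem_roots hMc0).mpr hρ
    rw [hroots_eq] at this
    simpa using this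
  -- basic facts about roots
  have hfin : ∀ ρ : ℂ, M.charpoly.IsRoot ρ → 0 < orderOf ρ ∧ orderOf ρ ∣ d := by
    intro ρ hρ
    have hpow : ρ ^ d = 1 := root_pow_eq_one hMd hρ
    have hdvd : orderOf ρ ∣ d := orderOf_dvd_of_pow_eq_one hpow
    have hposr : 0 < orderOf ρ :=
      orderOf_pos_iff.mpr (isOfFinOrder_iff_pow_eq_one.mpr ⟨d, hd0, hpow⟩)
    exact ⟨hposr, hdvd⟩
  -- cyclotomic divisibility
  have hcyc : ∀ ρ : ℂ, M.charpoly.IsRoot ρ → cyclotomic (orderOf ρ) ℚ ∣ q := by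
    intro ρ hρ
    obtain ⟨hposr, -⟩ := hfin ρ hρ
    have hprim : IsPrimitiveRoot ρ (orderOf ρ) := IsPrimitiveRoot.orderOf ρ
    rw [cyclotomic_eq_minpoly_rat hprim hposr]
    apply minpoly.dvd ℚ ρ
    rw [Polynomial.aeval_def, ← Polynomial.eval_map, hmapq, hpc,
      Matrix.charpoly_fromBlocks_zero₁₂]
    simp [hρ.eq_zero]
  set n1 : ℕ := orderOf lam with hn1def
  set n2 : ℕ := orderOf mu with hn2def
  obtain ⟨hn1pos, hn1d⟩ := hfin lam hlam
  obtain ⟨hn2pos, hn2d⟩ := hfin mu hmu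
  -- d = lcm n1 n2
  have hlcmpos : 0 < Nat.lcm n1 n2 := Nat.pos_of_ne_zero (Nat.lcm_ne_zero hn1pos.ne' hn2pos.ne')
  have hdlcm : d = Nat.lcm n1 n2 := by
    have hdvd1 : Nat.lcm n1 n2 ∣ d := Nat.lcm_dvd hn1d hn2d
    have hMlcm : M ^ Nat.lcm n1 n2 = 1 := by
      apply pow_eq_one_of_roots hd0 hlcmpos hMd
      intro ρ hρ
      rcases hclass ρ hρ with rfl | rfl | rfl
      · exact one_pow _
      · exact orderOf_dvd_iff_pow_eq_one.mp (Nat.dvd_lcm_left n1 n2)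
      · exact orderOf_dvd_iff_pow_eq_one.mp (Nat.dvd_lcm_right n1 n2)
    have hAlcm : A ^ Nat.lcm n1 n2 = 1 := by
      apply Units.ext
      simpa [Units.val_pow_eq_pow_val] using hMlcm
    have hdvd2 : d ∣ Nat.lcm n1 n2 := hd ▸ orderOf_dvd_iff_pow_eq_one.mpr hAlcm
    exact Nat.dvd_antisymm hdvd2 hdvd1
  -- order of 1
  have h1ord : orderOf (1 : ℂ) = 1 := orderOf_one
  have hcyc1 : cyclotomic 1 ℚ ∣ q := by
    have := hcyc 1 h1
    rwa [h1ord] at this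
  -- totient bound for any root order
  have htotb : ∀ ρ : ℂ, M.charpoly.IsRoot ρ → (orderOf ρ).totient ≤ 5 := by
    intro ρ hρ
    by_cases h : orderOf ρ = 1
    · rw [h]; simp
    · have hdvd : cyclotomic 1 ℚ * cyclotomic (orderOf ρ) ℚ ∣ q :=
        (cyclotomic.isCoprime_rat (fun hh => h hh.symm)).mul_dvd hcyc1 (hcyc ρ hρ)
      have := Polynomial.natDegree_le_of_dvd hdvd hq0
      rw [Polynomial.natDegree_mul (cyclotomic_ne_zero 1 ℚ)
        (cyclotomic_ne_zero (orderOf ρ) ℚ), natDegree_cyclotomic, natDegree_cyclotomic,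
        hqdeg, Nat.totient_one] at this
      omega
  have htot1 : n1.totient ≤ 5 := htotb lam hlam
  have htot2 : n2.totient ≤ 5 := htotb mu hmu
  -- divisibility into 120
  have hmem1 : n1 ∈ Nat.divisors 120 :=
    Nat.mem_divisors.mpr ⟨tot_dvd_120 hn1pos htot1, by norm_num⟩
  have hmem2 : n2 ∈ Nat.divisors 120 :=
    Nat.mem_divisors.mpr ⟨tot_dvd_120 hn2pos htot2, by norm_num⟩
  have hlcm1 : 1 < Nat.lcm n1 n2 := hdlcm ▸ hd1
  -- the hypothesis disjunction
  have hdisj : (n1 = n2 ∧ n1.totient ≤ 5) ∨ (n1 = 1 ∧ n2.totient ≤ 5) ∨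
      (n2 = 1 ∧ n1.totient ≤ 5) ∨ (n1.totient + n2.totient ≤ 5) := by
    by_cases h12 : n1 = n2
    · exact Or.inl ⟨h12, htot1⟩
    · by_cases hn11 : n1 = 1
      · exact Or.inr (Or.inl ⟨hn11, htot2⟩)
      · by_cases hn21 : n2 = 1
        · exact Or.inr (Or.inr (Or.inl ⟨hn21, htot1⟩))
        · refine Or.inr (Or.inr (Or.inr ?_))
          have hco1 : IsCoprime (cyclotomic 1 ℚ * cyclotomic n1 ℚ) (cyclotomic n2 ℚ) :=
            IsCoprime.mul_left (cyclotomic.isCoprime_rat (fun hh => hn21 hh.symm))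
              (cyclotomic.isCoprime_rat h12)
          have hdvd : (cyclotomic 1 ℚ * cyclotomic n1 ℚ) * cyclotomic n2 ℚ ∣ q :=
            hco1.mul_dvd
              ((cyclotomic.isCoprime_rat (fun hh => hn11 hh.symm)).mul_dvd hcyc1
                (hcyc lam hlam)) (hcyc mu hmu)
          have := Polynomial.natDegree_le_of_dvd hdvd hq0
          rw [Polynomial.natDegree_mul (mul_ne_zero (cyclotomic_ne_zero 1 ℚ)
              (cyclotomic_ne_zero n1 ℚ)) (cyclotomic_ne_zero n2 ℚ),
            Polynomial.natDegree_mul (cyclotomic_ne_zero 1 ℚ) (cyclotomic_ne_zero n1 ℚ),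
            natDegree_cyclotomic, natDegree_cyclotomic, natDegree_cyclotomic, hqdeg,
            Nat.totient_one] at this
          omega
  have hfinal := final_arith n1 hmem1 n2 hmem2 hlcm1 hdisj
  rw [← hdlcm] at hfinal
  simp only [Set.mem_insert_iff, Set.mem_singleton_iff]
  tauto
end

section
/- Let A ∈ GL(3, ℂ) be a matrix of finite order d > 1 such that the characteristic polynomial of A ⊕ Ā has integer coefficients. If every eigenvalue of A is a primitive d-th root of unity, then d ∈ {2, 3, 4, 6, 7, 9, 14, 18}. -/
open Matrix Polynomial

private lemma aux_dvd_deg (q : Polynomial ℚ) (hq : Irreducible q) (n : ℕ) :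
    ∀ p : Polynomial ℚ, p.natDegree = n → p ≠ 0 →
      (∀ z : ℂ, aeval z p = 0 → aeval z q = 0) → q.natDegree ∣ n := by
  induction n using Nat.strong_induction_on with
  | _ n ih =>
    intro p hpn hp0 hroot
    rcases Nat.eq_zero_or_pos n with h0 | hpos
    · simp [h0]
    have hdeg : 0 < (p.map (algebraMap ℚ ℂ)).degree := by
      rw [degree_map_eq_of_injective (algebraMap ℚ ℂ).injective]
      exact natDegree_pos_iff_degree_pos.mp (hpn ▸ hpos)
    obtain ⟨z, hz⟩ := Complex.exists_root hdeg
    have hz' : aeval z p = 0 := by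
      rwa [aeval_def, ← eval_map]
    have hq0 : aeval z q = 0 := hroot z hz'
    have hint : IsIntegral ℚ z := (isAlgebraic_iff_isIntegral.mp ⟨p, hp0, hz'⟩)
    have hmin : minpoly ℚ z ∣ q := minpoly.dvd ℚ z hq0
    have hminp : minpoly ℚ z ∣ p := minpoly.dvd ℚ z hz'
    have hqp : q ∣ p := dvd_trans ((minpoly.irreducible hint).dvd_symm hq hmin) hminp
    obtain ⟨s, hs⟩ := hqp
    have hs0 : s ≠ 0 := by rintro rfl; rw [mul_zero] at hs; exact hp0 hs
    have hdeg' : n = q.natDegree + s.natDegree := by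
      rw [← hpn, hs, natDegree_mul hq.ne_zero hs0]
    have hlt : s.natDegree < n := by
      have := hq.natDegree_pos
      omega
    have hdvds : q.natDegree ∣ s.natDegree :=
      ih s.natDegree hlt s rfl hs0 (fun w hw => hroot w (by rw [hs, _root_.map_mul, hw, mul_zero]))
    rw [hdeg']
    exact dvd_add dvd_rfl hdvds

private lemma aux_tot (d : ℕ) (hd1 : 1 < d) (h6 : d.totient ∣ 6) :
    d ∈ ({2, 3, 4, 6, 7, 9, 14, 18} : Set ℕ) := by
  have hdvd : d ∣ 252 := by
    rw [Nat.dvd_iff_prime_pow_dvd_dvd]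
    intro p k hp hpk
    rcases Nat.eq_zero_or_pos k with rfl | hk
    · simp
    have hppk : (p ^ k).totient ∣ 6 := dvd_trans (Nat.totient_dvd_of_dvd hpk) h6
    rw [Nat.totient_prime_pow hp hk] at hppk
    have hp1 : p - 1 ∣ 6 := dvd_trans (dvd_mul_left _ _) hppk
    have hple : p ≤ 7 := by
      have := Nat.le_of_dvd (by norm_num) hp1
      have := hp.two_le
      omega
    have hp2 := hp.two_le
    interval_cases p
    · -- p = 2
      have hk2 : k ≤ 2 := by
        by_contra hk3
        have h4 : (4 : ℕ) ∣ 6 := by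
          refine dvd_trans ?_ hppk
          calc (4:ℕ) = 2 ^ 2 * 1 := by norm_num
          _ ∣ 2 ^ (k-1) * (2-1) := by
              exact mul_dvd_mul (pow_dvd_pow 2 (by omega)) (by norm_num)
        norm_num at h4
      calc (2:ℕ) ^ k ∣ 2 ^ 2 := pow_dvd_pow 2 hk2
      _ ∣ 252 := by norm_num
    · -- p = 3
      have hk2 : k ≤ 2 := by
        by_contra hk3
        have h9 : (9 : ℕ) ∣ 6 := by
          refine dvd_trans ?_ hppk
          calc (9:ℕ) = 3 ^ 2 * 1 := by norm_num
          _ ∣ 3 ^ (k-1) * (3-1) := by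
              exact mul_dvd_mul (pow_dvd_pow 3 (by omega)) (by norm_num)
        norm_num at h9
      calc (3:ℕ) ^ k ∣ 3 ^ 2 := pow_dvd_pow 3 hk2
      _ ∣ 252 := by norm_num
    · -- p = 4 not prime
      exact absurd hp (by norm_num)
    · -- p = 5
      exfalso
      norm_num at hp1
    · -- p = 6 not prime
      exact absurd hp (by norm_num)
    · -- p = 7
      have hk1 : k ≤ 1 := by
        by_contra hk2
        have h7 : (7 : ℕ) ∣ 6 := by
          refine dvd_trans ?_ hppk
          calc (7:ℕ) ∣ 7 ^ (k-1) := dvd_pow_self 7 (by omega)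
          _ ∣ 7 ^ (k-1) * (7-1) := dvd_mul_right _ _
        norm_num at h7
      calc (7:ℕ) ^ k ∣ 7 ^ 1 := pow_dvd_pow 7 hk1
      _ ∣ 252 := by norm_num
  have hmem : d ∈ Nat.divisors 252 := Nat.mem_divisors.mpr ⟨hdvd, by norm_num⟩
  have key : ∀ x ∈ Nat.divisors 252, x.totient ∣ 6 → 1 < x →
      x = 2 ∨ x = 3 ∨ x = 4 ∨ x = 6 ∨ x = 7 ∨ x = 9 ∨ x = 14 ∨ x = 18 := by decide
  have hv := key d hmem h6 hd1
  simp only [Set.mem_insert_iff, Set.mem_singleton_iff]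
  tauto

/-- If `A ∈ GL(3,ℂ)` has finite order `d > 1`, the characteristic
polynomial of `A ⊕ Ā` has integer coefficients, and every eigenvalue of `A` is a
primitive `d`-th root of unity, then `d ∈ {2,3,4,6,7,9,14,18}`. -/
theorem rigid_torus_quotient_stmt2 (A : Matrix.GeneralLinearGroup (Fin 3) ℂ) (d : ℕ)
    (hd : orderOf A = d) (hd1 : 1 < d)
    (hint : HasIntegralCharPolyWithConj (A : Matrix (Fin 3) (Fin 3) ℂ))
    (hprim : ∀ z : ℂ, (A : Matrix (Fin 3) (Fin 3) ℂ).charpoly.IsRoot z →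
      IsPrimitiveRoot z d) :
    d ∈ ({2, 3, 4, 6, 7, 9, 14, 18} : Set ℕ) := by
  obtain ⟨pz, hpm, hpc⟩ := hint
  have hd0 : 0 < d := by omega
  set B := (A : Matrix (Fin 3) (Fin 3) ℂ) with hB
  have hMroot : ∀ z : ℂ,
      ((Matrix.fromBlocks B 0 0 (B.map (starRingEnd ℂ))).charpoly).IsRoot z →
      IsPrimitiveRoot z d := by
    intro z hz
    rw [Matrix.charpoly_fromBlocks_zero₁₂, IsRoot, eval_mul] at hz
    rcases mul_eq_zero.mp hz with h | h
    · exact hprim z h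
    · rw [Matrix.charpoly_map] at h
      have h2 : (B.charpoly).eval ((starRingEnd ℂ) z) = 0 := by
        apply (starRingEnd ℂ).injective
        have he := eval₂_hom (p := B.charpoly) (starRingEnd ℂ) ((starRingEnd ℂ) z)
        rw [Complex.conj_conj] at he
        rw [map_zero, ← h, eval_map, ← he]
      have hpr := hprim _ h2
      have hmapped := hpr.map_of_injective (f := starRingEnd ℂ) (starRingEnd ℂ).injective
      rwa [Complex.conj_conj] at hmapped
  set pq : Polynomial ℚ := pz.map (Int.castRingHom ℚ) with hpqdef
  have hmap : pq.map (algebraMap ℚ ℂ) = pz.map (Int.castRingHom ℂ) := by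
    rw [hpqdef, Polynomial.map_map]
    congr 1
  have hpqm : pq.Monic := hpm.map _
  have hdeg6 : pq.natDegree = 6 := by
    have h1 : (pq.map (algebraMap ℚ ℂ)).natDegree = 6 := by
      rw [hmap, hpc, Matrix.charpoly_natDegree_eq_dim]
      simp
    rwa [hpqm.natDegree_map] at h1
  have hroots : ∀ z : ℂ, aeval z pq = 0 → aeval z (cyclotomic d ℚ) = 0 := by
    intro z hz
    rw [aeval_def, ← eval_map, hmap, hpc] at hz
    have hzprim := hMroot z hz
    have hroot := hzprim.isRoot_cyclotomic hd0
    rw [aeval_def, ← eval_map, map_cyclotomic]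
    exact hroot
  have hdvd := aux_dvd_deg (cyclotomic d ℚ) (cyclotomic.irreducible_rat hd0) 6 pq
    hdeg6 hpqm.ne_zero hroots
  rw [natDegree_cyclotomic] at hdvd
  exact aux_tot d hd1 hdvd
end

section
/- A tuple (N₂, N₃, N₄, N₆, N₉, N₁₄) of non-negative integers satisfies 1 = N₂/16 + N₃/9 + 5N₄/32 + 35N₆/144 + N₉/3 + 7N₁₄/16 (equivalently, 18N₂ + 32N₃ + 45N₄ + 70N₆ + 96N₉ + 126N₁₄ = 288) if and only if it is one of the following 15 tuples: (0,1,2,1,1,0), (0,4,2,1,0,0), (1,0,6,0,0,0), (2,0,0,0,0,2), (4,0,2,0,0,1), (5,1,0,1,1,0), (5,4,0,1,0,0), (6,0,4,0,0,0), (9,0,0,0,0,1), (11,0,2,0,0,0), (16,0,0,0,0,0), (0,0,0,0,3,0), (0,3,0,0,2,0), (0,6,0,0,1,0), (0,9,0,0,0,0). -/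
set_option maxHeartbeats 1000000

/-- The complete list of non-negative integer solutions of the
orbifold Riemann–Roch condition
`1 = N₂/16 + N₃/9 + 5N₄/32 + 35N₆/144 + N₉/3 + 7N₁₄/16`. -/
theorem rigid_torus_quotient_stmt5 (N2 N3 N4 N6 N9 N14 : ℕ) :
    (N2 : ℚ) / 16 + (N3 : ℚ) / 9 + 5 * (N4 : ℚ) / 32 + 35 * (N6 : ℚ) / 144 +
      (N9 : ℚ) / 3 + 7 * (N14 : ℚ) / 16 = 1 ↔
    (N2, N3, N4, N6, N9, N14) ∈
      ({(0,1,2,1,1,0), (0,4,2,1,0,0), (1,0,6,0,0,0), (2,0,0,0,0,2), (4,0,2,0,0,1),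
        (5,1,0,1,1,0), (5,4,0,1,0,0), (6,0,4,0,0,0), (9,0,0,0,0,1), (11,0,2,0,0,0),
        (16,0,0,0,0,0), (0,0,0,0,3,0), (0,3,0,0,2,0), (0,6,0,0,1,0), (0,9,0,0,0,0)} :
        Set (ℕ × ℕ × ℕ × ℕ × ℕ × ℕ)) := by
  have key : ((N2 : ℚ) / 16 + (N3 : ℚ) / 9 + 5 * (N4 : ℚ) / 32 + 35 * (N6 : ℚ) / 144 +
      (N9 : ℚ) / 3 + 7 * (N14 : ℚ) / 16 = 1) ↔
      18 * N2 + 32 * N3 + 45 * N4 + 70 * N6 + 96 * N9 + 126 * N14 = 288 := by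
    constructor
    · intro h
      have h2 : (18 * N2 + 32 * N3 + 45 * N4 + 70 * N6 + 96 * N9 + 126 * N14 : ℚ) = 288 := by
        field_simp at h; linarith
      exact_mod_cast h2
    · intro h
      have h2 : (18 * N2 + 32 * N3 + 45 * N4 + 70 * N6 + 96 * N9 + 126 * N14 : ℚ) = 288 := by
        exact_mod_cast congrArg (Nat.cast : ℕ → ℚ) h
      field_simp
      linarith
  rw [key]
  simp only [Set.mem_insert_iff, Set.mem_singleton_iff, Prod.mk.injEq]
  constructor
  · intro h
    have h14 : N14 = 0 ∨ N14 = 1 ∨ N14 = 2 := by omega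
    have h9 : N9 = 0 ∨ N9 = 1 ∨ N9 = 2 ∨ N9 = 3 := by omega
    have h6 : N6 = 0 ∨ N6 = 1 ∨ N6 = 2 ∨ N6 = 3 ∨ N6 = 4 := by omega
    have h4 : N4 = 0 ∨ N4 = 2 ∨ N4 = 4 ∨ N4 = 6 := by omega
    rcases h14 with rfl|rfl|rfl <;> rcases h9 with rfl|rfl|rfl|rfl <;>
      rcases h6 with rfl|rfl|rfl|rfl|rfl <;> rcases h4 with rfl|rfl|rfl|rfl <;>
      (norm_num; omega)
  · intro h
    omega
end

section
/- Let G be a finite group acting on a set T such that the stabilizer subgroup of every point of T is cyclic. Let m > 1 be a divisor of |G|, and assume: (i) for every g ∈ G fixing at least one point of T, the order of g is not a proper multiple of m (i.e. if m divides ord(g) then ord(g) = m); (ii) the set of elements of G of order m fixing at least one point of T is finite of cardinality s; (iii) every element of G of order m fixing at least one point of T has a finite fixed-point set of cardinality exactly ℓ. Then the set S = {x ∈ T : the stabilizer of x has exactly m elements} is finite and |S| · φ(m) = ℓ · s, where φ denotes Euler's totient function. -/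
/-- (Burnside-type count, Lemma 3.12.) Let a finite group `G` act on a
set `T` with all stabilizers cyclic. Let `m > 1` divide `|G|`, suppose that the order of
any element with a fixed point is never a proper multiple of `m`, that there are exactly
`s` elements of order `m` having a fixed point, and that each such element has exactly
`ℓ` fixed points. Then the set of points whose stabilizer has exactly `m` elements is
finite of cardinality `ℓ·s/φ(m)`. -/
theorem rigid_torus_quotient_stmt7 (G : Type*) [Group G] [Finite G]
    (T : Type*) [MulAction G T]
    (hcyc : ∀ x : T, IsCyclic (MulAction.stabilizer G x))
    (m : ℕ) (hm1 : 1 < m) (hmdvd : m ∣ Nat.card G)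
    (hmax : ∀ g : G, (∃ x : T, g • x = x) → m ∣ orderOf g → orderOf g = m)
    (s ℓ : ℕ)
    (hs : {g : G | orderOf g = m ∧ ∃ x : T, g • x = x}.ncard = s)
    (hl : ∀ g : G, orderOf g = m → (∃ x : T, g • x = x) →
      {x : T | g • x = x}.Finite ∧ {x : T | g • x = x}.ncard = ℓ) :
    {x : T | Nat.card (MulAction.stabilizer G x) = m}.Finite ∧
    {x : T | Nat.card (MulAction.stabilizer G x) = m}.ncard * Nat.totient m = ℓ * s := by
  classical
  have _instG : Fintype G := Fintype.ofFinite G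
  set S := {x : T | Nat.card (MulAction.stabilizer G x) = m} with hSdef
  set A := {g : G | orderOf g = m ∧ ∃ x : T, g • x = x} with hAdef
  -- Lemma A: if g of order m fixes x, then the stabilizer of x has cardinality m.
  have lemA : ∀ (g : G) (x : T), orderOf g = m → g • x = x →
      Nat.card (MulAction.stabilizer G x) = m := by
    intro g x hg hgx
    have _ : Fintype (MulAction.stabilizer G x) := Fintype.ofFinite _
    obtain ⟨h, hh⟩ := (hcyc x).exists_generator
    have hcard : Nat.card (MulAction.stabilizer G x) = orderOf (h : G) := by
      rw [Subgroup.orderOf_coe, orderOf_eq_card_of_forall_mem_zpowers hh,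
        Nat.card_eq_fintype_card]
    have hmdvdh : m ∣ orderOf (h : G) := by
      rw [← hg, ← hcard]
      exact Subgroup.orderOf_dvd_natCard _ hgx
    have hfix : (h : G) • x = x := h.2
    rw [hcard, hmax (h : G) ⟨x, hfix⟩ hmdvdh]
  -- Lemma B: each x in S is fixed by some element of A.
  have lemB : ∀ x ∈ S, ∃ g ∈ A, g • x = x := by
    intro x hx
    have _ : Fintype (MulAction.stabilizer G x) := Fintype.ofFinite _
    obtain ⟨h, hh⟩ := (hcyc x).exists_generator
    have hcard : Nat.card (MulAction.stabilizer G x) = orderOf (h : G) := by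
      rw [Subgroup.orderOf_coe, orderOf_eq_card_of_forall_mem_zpowers hh,
        Nat.card_eq_fintype_card]
    have hfix : (h : G) • x = x := h.2
    have hordh : orderOf (h : G) = m := by rw [← hcard]; exact hx
    exact ⟨(h : G), ⟨hordh, ⟨x, hfix⟩⟩, hfix⟩
  have hAfin : A.Finite := Set.toFinite _
  -- S is finite
  have hSfin : S.Finite := by
    apply Set.Finite.subset (hAfin.biUnion (fun g hg => (hl g hg.1 hg.2).1))
    intro x hx
    obtain ⟨g, hg, hgx⟩ := lemB x hx
    exact Set.mem_biUnion hg hgx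
  refine ⟨hSfin, ?_⟩
  set Af := hAfin.toFinset with hAfdef
  set Sf := hSfin.toFinset with hSfdef
  set P : Finset (G × T) := (Af ×ˢ Sf).filter (fun p => p.1 • p.2 = p.2) with hPdef
  have memP : ∀ p : G × T, p ∈ P ↔ orderOf p.1 = m ∧ p.1 • p.2 = p.2 := by
    intro ⟨g, x⟩
    simp only [hPdef, Finset.mem_filter, Finset.mem_product, hAfdef, hSfdef,
      Set.Finite.mem_toFinset]
    constructor
    · rintro ⟨⟨hg, _⟩, hfix⟩; exact ⟨hg.1, hfix⟩
    · rintro ⟨hg, hfix⟩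
      exact ⟨⟨⟨hg, ⟨x, hfix⟩⟩, lemA g x hg hfix⟩, hfix⟩
  -- count by fibers over g
  have count1 : P.card = s * ℓ := by
    rw [Finset.card_eq_sum_card_fiberwise (f := Prod.fst) (t := Af)
      (fun p hp => ((Finset.mem_filter.1 hp).1 |> Finset.mem_product.1).1)]
    have : ∀ g ∈ Af, (P.filter (fun p => p.1 = g)).card = ℓ := by
      intro g hg
      have hgA : g ∈ A := (Set.Finite.mem_toFinset _).1 hg
      obtain ⟨hfixfin, hfixcard⟩ := hl g hgA.1 hgA.2
      have : P.filter (fun p => p.1 = g) = hfixfin.toFinset.image (fun y => (g, y)) := by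
        ext ⟨g', x⟩
        simp only [Finset.mem_filter, Finset.mem_image, Set.Finite.mem_toFinset,
          Set.mem_setOf_eq, Prod.mk.injEq, memP]
        constructor
        · rintro ⟨⟨_, hfix⟩, rfl⟩; exact ⟨x, hfix, rfl, rfl⟩
        · rintro ⟨y, hy, rfl, rfl⟩; exact ⟨⟨hgA.1, hy⟩, rfl⟩
      rw [this, Finset.card_image_of_injective _ (fun a b h => (Prod.ext_iff.1 h).2),
        ← hfixcard, Set.ncard_eq_toFinset_card _ hfixfin]
    rw [Finset.sum_congr rfl this, Finset.sum_const, smul_eq_mul, ← hs,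
      Set.ncard_eq_toFinset_card _ hAfin]
  -- count by fibers over x
  have count2 : P.card = Sf.card * Nat.totient m := by
    rw [Finset.card_eq_sum_card_fiberwise (f := Prod.snd) (t := Sf)
      (fun p hp => ((Finset.mem_filter.1 hp).1 |> Finset.mem_product.1).2)]
    have : ∀ x ∈ Sf, (P.filter (fun p => p.2 = x)).card = Nat.totient m := by
      intro x hx
      have hxS : x ∈ S := (Set.Finite.mem_toFinset _).1 hx
      have _ : Fintype (MulAction.stabilizer G x) := Fintype.ofFinite _
      have hcard : Fintype.card (MulAction.stabilizer G x) = m := by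
        rw [← Nat.card_eq_fintype_card]; exact hxS
      have hcyc' := hcyc x
      have key := IsCyclic.card_orderOf_eq_totient
        (α := MulAction.stabilizer G x) (d := m) (hcard ▸ dvd_rfl)
      have himg : P.filter (fun p => p.2 = x) =
          Finset.image (fun h : MulAction.stabilizer G x => ((h : G), x))
            (Finset.univ.filter (fun h : MulAction.stabilizer G x => orderOf h = m)) := by
        ext ⟨g, y⟩
        simp only [Finset.mem_filter, Finset.mem_image, Finset.mem_univ, true_and,
          Prod.mk.injEq, memP]
        constructor
        · rintro ⟨⟨hord, hfix⟩, rfl⟩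
          exact ⟨⟨g, hfix⟩, (Subgroup.orderOf_mk g hfix).trans hord, rfl, rfl⟩
        · rintro ⟨h, hord, rfl, rfl⟩
          exact ⟨⟨(Subgroup.orderOf_coe h).trans hord, h.2⟩, rfl⟩
      rw [himg, Finset.card_image_of_injective _
        (fun a b h => Subtype.ext (Prod.ext_iff.1 h).1), ← key]
    rw [Finset.sum_congr rfl this, Finset.sum_const, smul_eq_mul]
  rw [Set.ncard_eq_toFinset_card _ hSfin, ← hSfdef, ← count2, count1, Nat.mul_comm]
end

section
/- Let ζ₃ = e^{2πi/3} and R = ℤ[ζ₃] ⊆ ℂ. Let H ⊆ GL(3, R) be the subgroup H = {diag(ζ₃^a, ζ₃^a, ζ₃^b) : a, b ∈ ℤ/3ℤ}. Then a matrix M ∈ GL(3, R) satisfies M·H·M⁻¹ = H if and only if M is block-diagonal of the form M = [[C, 0], [0, c]], where C is an invertible 2×2 matrix over R and c is a unit of R. -/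
open Matrix

/-- The primitive third root of unity `ζ₃ = e^{2πi/3}`. -/
noncomputable def zeta3 : ℂ := Complex.exp (2 * Real.pi * Complex.I / 3)

/-- The ring of Eisenstein integers `R = ℤ[ζ₃]`, the subring of `ℂ` generated by `ζ₃`. -/
noncomputable def EisR : Subring ℂ := Subring.closure {zeta3}

/-- `ζ₃` as an element of `R = ℤ[ζ₃]`. -/
noncomputable def zR : EisR := ⟨zeta3, Subring.subset_closure rfl⟩

/-- The subgroup `H = {diag(ζ₃^a, ζ₃^a, ζ₃^b)} ⊆ GL(3,R)`, described as the set of its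
underlying matrices. -/
noncomputable def Hset : Set (Matrix (Fin 3) (Fin 3) EisR) :=
  {A | ∃ a b : ZMod 3, A = Matrix.diagonal ![zR ^ a.val, zR ^ a.val, zR ^ b.val]}

lemma zeta3_pow_three : zeta3 ^ 3 = 1 := by
  rw [zeta3, ← Complex.exp_nat_mul]
  rw [show ((3:ℕ):ℂ) * (2 * Real.pi * Complex.I / 3) = 2 * Real.pi * Complex.I by push_cast; ring]
  exact Complex.exp_two_pi_mul_I

lemma zeta3_im_pos : 0 < zeta3.im := by
  have h : zeta3.im = Real.sin (2 * Real.pi / 3) := by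
    rw [zeta3, show (2 * (Real.pi:ℂ) * Complex.I / 3)
        = ((2 * Real.pi / 3 : ℝ):ℂ) * Complex.I by push_cast; ring]
    exact Complex.exp_ofReal_mul_I_im _
  rw [h]
  apply Real.sin_pos_of_pos_of_lt_pi <;> nlinarith [Real.pi_pos]

lemma zeta3_ne_one : zeta3 ≠ 1 := by
  intro h
  have h2 := zeta3_im_pos
  rw [h] at h2
  simp at h2

lemma zeta3_sq : zeta3 ^ 2 = -1 - zeta3 := by
  have h3 := zeta3_pow_three
  have h : (zeta3 - 1) * (zeta3 ^ 2 + zeta3 + 1) = 0 := by linear_combination h3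
  rcases mul_eq_zero.1 h with h | h
  · exact absurd (sub_eq_zero.1 h) zeta3_ne_one
  · linear_combination h

lemma key_trace (p q : ℕ) (hp : p < 3) (hq : q < 3)
    (h : zeta3 ^ p + zeta3 ^ p + zeta3 ^ q = zeta3 + zeta3 + 1) : p = 1 ∧ q = 0 := by
  have hs := zeta3_im_pos
  interval_cases p <;> interval_cases q <;>
    (try simp only [pow_zero, pow_one] at h) <;>
    (try rw [zeta3_sq] at h) <;>
    first
      | exact ⟨rfl, rfl⟩
      | (exfalso;
         have him := congrArg Complex.im h;
         simp [Complex.add_im, Complex.sub_im, Complex.neg_im, Complex.one_im] at him;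
         linarith)

lemma zR_fix {x : EisR} (h : zR * x = x) : x = 0 := by
  have h1 : zeta3 * (x:ℂ) = (x:ℂ) := by
    have := congrArg Subtype.val h
    push_cast at this
    exact this
  have h' : (zeta3 - 1) * (x:ℂ) = 0 := by linear_combination h1
  rcases mul_eq_zero.1 h' with h'' | h''
  · exact absurd (sub_eq_zero.1 h'') zeta3_ne_one
  · exact Subtype.ext h''

lemma offblock_zero {A : Matrix (Fin 3) (Fin 3) EisR}
    (h : A * Matrix.diagonal ![zR, zR, 1] = Matrix.diagonal ![zR, zR, 1] * A) :
    A 0 2 = 0 ∧ A 1 2 = 0 ∧ A 2 0 = 0 ∧ A 2 1 = 0 := by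
  have e := fun i j => congrArg (fun B => B i j) h
  simp only [Matrix.mul_diagonal, Matrix.diagonal_mul] at e
  refine ⟨?_, ?_, ?_, ?_⟩
  · have := e 0 2; simp at this; exact zR_fix this.symm
  · have := e 1 2; simp at this; exact zR_fix this.symm
  · have := e 2 0; simp at this; exact zR_fix (by rw [mul_comm] at this; exact this)
  · have := e 2 1; simp at this; exact zR_fix (by rw [mul_comm] at this; exact this)

lemma fse0 : (finSumFinEquiv (m:=2) (n:=1)).symm 0 = Sum.inl 0 := by decide
lemma fse1 : (finSumFinEquiv (m:=2) (n:=1)).symm 1 = Sum.inl 1 := by decide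
lemma fse2 : (finSumFinEquiv (m:=2) (n:=1)).symm 2 = Sum.inr 0 := by decide

set_option maxHeartbeats 1000000 in
/-- (Proposition 4.14.) An invertible matrix `M ∈ GL(3, ℤ[ζ₃])`
normalizes `H = {diag(ζ₃^a, ζ₃^a, ζ₃^b)}` if and only if it is block-diagonal
`M = [[C,0],[0,c]]` with `C ∈ GL(2, ℤ[ζ₃])` and `c` a unit of `ℤ[ζ₃]`. -/
theorem rigid_torus_quotient_stmt11 (M : (Matrix (Fin 3) (Fin 3) EisR)ˣ) :
    ((fun A => (M : Matrix (Fin 3) (Fin 3) EisR) * A *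
        ((M⁻¹ : (Matrix (Fin 3) (Fin 3) EisR)ˣ) : Matrix (Fin 3) (Fin 3) EisR)) '' Hset
      = Hset) ↔
    ∃ (C : (Matrix (Fin 2) (Fin 2) EisR)ˣ) (c : EisRˣ),
      (M : Matrix (Fin 3) (Fin 3) EisR) =
        Matrix.reindex finSumFinEquiv finSumFinEquiv
          (Matrix.fromBlocks (C : Matrix (Fin 2) (Fin 2) EisR) 0 0
            (Matrix.diagonal fun _ : Fin 1 => (c : EisR))) := by
  set Mm : Matrix (Fin 3) (Fin 3) EisR := (M : Matrix (Fin 3) (Fin 3) EisR) with hMm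
  set N : Matrix (Fin 3) (Fin 3) EisR :=
    ((M⁻¹ : (Matrix (Fin 3) (Fin 3) EisR)ˣ) : Matrix (Fin 3) (Fin 3) EisR) with hN
  have hMN : Mm * N = 1 := M.mul_inv
  have hNM : N * Mm = 1 := M.inv_mul
  constructor
  · intro himg
    set g : Matrix (Fin 3) (Fin 3) EisR := Matrix.diagonal ![zR, zR, 1] with hg
    have hgH : g ∈ Hset := by
      refine ⟨1, 0, ?_⟩
      show g = Matrix.diagonal ![zR ^ (1 : ZMod 3).val, zR ^ (1 : ZMod 3).val, zR ^ (0 : ZMod 3).val]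
      have h1 : (1 : ZMod 3).val = 1 := rfl
      have h0 : (0 : ZMod 3).val = 0 := rfl
      rw [h1, h0, pow_one, pow_zero]
    have hconj : Mm * g * N ∈ Hset := by
      rw [← himg]; exact Set.mem_image_of_mem _ hgH
    obtain ⟨a, b, hab⟩ := hconj
    have htr : Matrix.trace (Mm * g * N) = Matrix.trace g := by
      rw [Matrix.trace_mul_comm, ← Matrix.mul_assoc, hNM, Matrix.one_mul]
    rw [hab] at htr
    have htr2 : zR ^ a.val + zR ^ a.val + zR ^ b.val = zR + zR + 1 := by
      simpa [Matrix.trace_diagonal, Fin.sum_univ_three, hg] using htr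
    have htrC : zeta3 ^ a.val + zeta3 ^ a.val + zeta3 ^ b.val = zeta3 + zeta3 + 1 := by
      have := congrArg Subtype.val htr2
      push_cast at this
      exact this
    obtain ⟨ha, hb⟩ := key_trace a.val b.val a.val_lt b.val_lt htrC
    have hgg : Mm * g * N = g := by
      rw [hab, ha, hb, pow_one, pow_zero]
    have hMg : Mm * g = g * Mm := by
      calc Mm * g = (Mm * g * N) * Mm := by
            rw [Matrix.mul_assoc (Mm * g), hNM, Matrix.mul_one]
        _ = g * Mm := by rw [hgg]
    have hNg : N * g = g * N := by
      have hc1 : Commute Mm g := hMg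
      exact (hc1.units_inv_left (u := M))
    obtain ⟨m02, m12, m20, m21⟩ := offblock_zero hMg
    obtain ⟨n02, n12, n20, n21⟩ := offblock_zero hNg
    have hsum : ∀ i j : Fin 3,
        Mm i 0 * N 0 j + Mm i 1 * N 1 j + Mm i 2 * N 2 j
          = (1 : Matrix (Fin 3) (Fin 3) EisR) i j := by
      intro i j
      rw [← hMN, Matrix.mul_apply, Fin.sum_univ_three]
    have hsum' : ∀ i j : Fin 3,
        N i 0 * Mm 0 j + N i 1 * Mm 1 j + N i 2 * Mm 2 j
          = (1 : Matrix (Fin 3) (Fin 3) EisR) i j := by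
      intro i j
      rw [← hNM, Matrix.mul_apply, Fin.sum_univ_three]
    set Cm : Matrix (Fin 2) (Fin 2) EisR := !![Mm 0 0, Mm 0 1; Mm 1 0, Mm 1 1] with hCm
    set Cm' : Matrix (Fin 2) (Fin 2) EisR := !![N 0 0, N 0 1; N 1 0, N 1 1] with hCm'
    have hCC' : Cm * Cm' = 1 := by
      ext i j
      fin_cases i <;> fin_cases j <;>
        simp [hCm, hCm', Matrix.mul_apply, Fin.sum_univ_two, Matrix.one_apply]
      · have := hsum 0 0; rw [m02] at this; simp [Matrix.one_apply] at this; exact_mod_cast this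
      · have := hsum 0 1; rw [m02] at this; simp [Matrix.one_apply] at this; exact_mod_cast this
      · have := hsum 1 0; rw [m12] at this; simp [Matrix.one_apply] at this; exact_mod_cast this
      · have := hsum 1 1; rw [m12] at this; simp [Matrix.one_apply] at this; exact_mod_cast this
    have hC'C : Cm' * Cm = 1 := by
      ext i j
      fin_cases i <;> fin_cases j <;>
        simp [hCm, hCm', Matrix.mul_apply, Fin.sum_univ_two, Matrix.one_apply]
      · have := hsum' 0 0; rw [n02] at this; simp [Matrix.one_apply] at this; exact_mod_cast this
      · have := hsum' 0 1; rw [n02] at this; simp [Matrix.one_apply] at this; exact_mod_cast this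
      · have := hsum' 1 0; rw [n12] at this; simp [Matrix.one_apply] at this; exact_mod_cast this
      · have := hsum' 1 1; rw [n12] at this; simp [Matrix.one_apply] at this; exact_mod_cast this
    have hc : Mm 2 2 * N 2 2 = 1 := by
      have := hsum 2 2; rw [m20, m21] at this; simp [Matrix.one_apply] at this
      linear_combination this
    have hc' : N 2 2 * Mm 2 2 = 1 := by
      have := hsum' 2 2; rw [n20, n21] at this; simp [Matrix.one_apply] at this
      linear_combination this
    refine ⟨⟨Cm, Cm', hCC', hC'C⟩, ⟨Mm 2 2, N 2 2, hc, hc'⟩, ?_⟩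
    show Mm = _
    ext i j
    fin_cases i <;> fin_cases j <;>
      simp [Matrix.reindex_apply, Matrix.submatrix_apply, fse0, fse1, fse2, hCm,
        m02, m12, m20, m21]
  · rintro ⟨C, c, hM⟩
    have hent := fun i j : Fin 3 => congrArg (fun A => A i j) hM
    simp only [Matrix.reindex_apply, Matrix.submatrix_apply] at hent
    have z02 : Mm 0 2 = 0 := by have := hent 0 2; rw [fse0, fse2] at this; simpa using this
    have z12 : Mm 1 2 = 0 := by have := hent 1 2; rw [fse1, fse2] at this; simpa using this
    have z20 : Mm 2 0 = 0 := by have := hent 2 0; rw [fse2, fse0] at this; simpa using this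
    have z21 : Mm 2 1 = 0 := by have := hent 2 1; rw [fse2, fse1] at this; simpa using this
    have hcomm : ∀ A ∈ Hset, Mm * A * N = A := by
      rintro A ⟨a, b, rfl⟩
      have hAc : Mm * Matrix.diagonal ![zR ^ a.val, zR ^ a.val, zR ^ b.val]
          = Matrix.diagonal ![zR ^ a.val, zR ^ a.val, zR ^ b.val] * Mm := by
        ext i j
        rw [Matrix.mul_diagonal, Matrix.diagonal_mul]
        fin_cases i <;> fin_cases j <;>
          simp [z02, z12, z20, z21] <;> ring
      rw [hAc, Matrix.mul_assoc, hMN, Matrix.mul_one]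
    calc (fun A => Mm * A * N) '' Hset = id '' Hset := Set.image_congr hcomm
      _ = Hset := Set.image_id _
end

section
/- Let σ : (ℤ/3ℤ)³ → (ℤ/3ℤ)³ be the cyclic coordinate shift σ(x₁, x₂, x₃) = (x₂, x₃, x₁). Let K be a subgroup of (ℤ/3ℤ)³ with σ(K) = K that contains no non-zero element of the form (λ, 0, 0), (0, λ, 0) or (0, 0, λ). Then K is the trivial subgroup, the line spanned by (1, 1, 1), or the plane {(x₁, x₂, x₃) : x₁ + x₂ + x₃ = 0}. -/
/-- The cyclic coordinate shift `σ(x₁,x₂,x₃) = (x₂,x₃,x₁)` on `(ℤ/3)³`. -/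
def cycShift (p : ZMod 3 × ZMod 3 × ZMod 3) : ZMod 3 × ZMod 3 × ZMod 3 :=
  (p.2.1, p.2.2, p.1)

/-- The plane `{x : x₁ + x₂ + x₃ = 0} ⊆ (ℤ/3)³` as an additive subgroup. -/
def tracePlane : AddSubgroup (ZMod 3 × ZMod 3 × ZMod 3) where
  carrier := {p | p.1 + p.2.1 + p.2.2 = 0}
  zero_mem' := by simp
  add_mem' := by
    rintro a b ha hb
    simp only [Set.mem_setOf_eq, Prod.fst_add, Prod.snd_add] at *
    linear_combination ha + hb
  neg_mem' := by
    rintro a ha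
    simp only [Set.mem_setOf_eq, Prod.fst_neg, Prod.snd_neg] at *
    linear_combination -ha

/-- (Core of Proposition 4.18.) A subgroup of `(ℤ/3)³` invariant under
the cyclic shift and containing no non-zero multiple of a standard basis vector is
trivial, the line spanned by `(1,1,1)`, or the plane `x₁ + x₂ + x₃ = 0`. -/
theorem rigid_torus_quotient_stmt17 (K : AddSubgroup (ZMod 3 × ZMod 3 × ZMod 3))
    (hσ : cycShift '' (K : Set (ZMod 3 × ZMod 3 × ZMod 3)) = K)
    (h1 : ∀ lam : ZMod 3, (lam, (0 : ZMod 3), (0 : ZMod 3)) ∈ K → lam = 0)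
    (h2 : ∀ lam : ZMod 3, ((0 : ZMod 3), lam, (0 : ZMod 3)) ∈ K → lam = 0)
    (h3 : ∀ lam : ZMod 3, ((0 : ZMod 3), (0 : ZMod 3), lam) ∈ K → lam = 0) :
    K = ⊥ ∨
    K = AddSubgroup.closure {((1 : ZMod 3), (1 : ZMod 3), (1 : ZMod 3))} ∨
    K = tracePlane := by
  -- σ-closure
  have hσ1 : ∀ x ∈ K, cycShift x ∈ K := by
    intro x hx
    have : cycShift x ∈ cycShift '' (K : Set (ZMod 3 × ZMod 3 × ZMod 3)) :=
      Set.mem_image_of_mem _ hx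
    rwa [hσ] at this
  -- diagonal of trace
  have hdiag : ∀ x ∈ K,
      ((x.1 + x.2.1 + x.2.2, x.1 + x.2.1 + x.2.2, x.1 + x.2.1 + x.2.2) :
        ZMod 3 × ZMod 3 × ZMod 3) ∈ K := by
    intro x hx
    have h := K.add_mem (K.add_mem hx (hσ1 x hx)) (hσ1 _ (hσ1 x hx))
    have heq : x + cycShift x + cycShift (cycShift x) =
        ((x.1 + x.2.1 + x.2.2, x.1 + x.2.1 + x.2.2, x.1 + x.2.1 + x.2.2) :
          ZMod 3 × ZMod 3 × ZMod 3) := by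
      obtain ⟨a, b, c⟩ := x
      simp only [cycShift, Prod.mk_add_mk, Prod.mk.injEq]
      refine ⟨trivial, by ring, by ring⟩
    rwa [heq] at h
  have hcases : ∀ z : ZMod 3, z ≠ 0 → z = 1 ∨ z = 2 := by decide
  have hdiag111 : ∀ a : ZMod 3, ((a, a, a) : ZMod 3 × ZMod 3 × ZMod 3) ∈ K → a ≠ 0 →
      (((1 : ZMod 3), (1 : ZMod 3), (1 : ZMod 3)) : ZMod 3 × ZMod 3 × ZMod 3) ∈ K := by
    intro a ha hne
    rcases hcases a hne with rfl | rfl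
    · exact ha
    · have := K.add_mem ha ha
      have e : ((2, 2, 2) : ZMod 3 × ZMod 3 × ZMod 3) + (2, 2, 2) = (1, 1, 1) := by decide
      rwa [e] at this
  by_cases h111 : (((1 : ZMod 3), (1 : ZMod 3), (1 : ZMod 3)) : ZMod 3 × ZMod 3 × ZMod 3) ∈ K
  · -- (1,1,1) ∈ K
    by_cases hall : ∀ x ∈ K, x.1 = x.2.1 ∧ x.2.1 = x.2.2
    · -- K is the diagonal line
      right; left
      apply le_antisymm
      · intro y hy
        obtain ⟨e1, e2⟩ := hall y hy
        have hy' : y = ((y.1, y.1, y.1) : ZMod 3 × ZMod 3 × ZMod 3) := by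
          obtain ⟨a, b, c⟩ := y
          simp only at e1 e2 ⊢
          rw [← e1, ← e2, e1]
        have hval : ((y.1, y.1, y.1) : ZMod 3 × ZMod 3 × ZMod 3) =
            y.1.val • (((1 : ZMod 3), (1 : ZMod 3), (1 : ZMod 3)) : ZMod 3 × ZMod 3 × ZMod 3) := by
          have : ∀ a : ZMod 3, ((a, a, a) : ZMod 3 × ZMod 3 × ZMod 3) =
              a.val • (((1 : ZMod 3), (1 : ZMod 3), (1 : ZMod 3)) : ZMod 3 × ZMod 3 × ZMod 3) := by
            decide
          exact this y.1
        rw [hy', hval]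
        exact AddSubgroup.nsmul_mem _ (AddSubgroup.subset_closure (Set.mem_singleton _)) _
      · exact (AddSubgroup.closure_le K).mpr (Set.singleton_subset_iff.mpr h111)
    · -- K contains a non-diagonal element: K is the plane
      right; right
      push_neg at hall
      obtain ⟨x, hx, hnd⟩ := hall
      -- key: any (0,p,q) ∈ K with p,q ≠ 0 gives (0,1,2) ∈ K
      have key : ∀ p q : ZMod 3, p ≠ 0 → q ≠ 0 →
          ((0, p, q) : ZMod 3 × ZMod 3 × ZMod 3) ∈ K →
          (((0 : ZMod 3), (1 : ZMod 3), (2 : ZMod 3)) : ZMod 3 × ZMod 3 × ZMod 3) ∈ K := by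
        intro p q hpne hqne hw
        have hσw : ((p, q, 0) : ZMod 3 × ZMod 3 × ZMod 3) ∈ K := hσ1 _ hw
        rcases hcases p hpne with rfl | rfl <;> rcases hcases q hqne with rfl | rfl
        · -- p = 1, q = 1 : (0,1,2) = (0,1,1) + 2•(1,1,0) + (1,1,1)
          have h := K.add_mem (K.add_mem hw (K.nsmul_mem hσw 2)) h111
          have e : ((0, 1, 1) : ZMod 3 × ZMod 3 × ZMod 3) + 2 • ((1, 1, 0) : ZMod 3 × ZMod 3 × ZMod 3)
              + (1, 1, 1) = (0, 1, 2) := by decide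
          rwa [e] at h
        · exact hw
        · -- p = 2, q = 1 : (0,1,2) = 2•(0,2,1)
          have h := K.nsmul_mem hw 2
          have e : (2 : ℕ) • ((0, 2, 1) : ZMod 3 × ZMod 3 × ZMod 3) = (0, 1, 2) := by decide
          rwa [e] at h
        · -- p = 2, q = 2 : (0,1,2) = 2•(0,2,2) + (2,2,0) + (1,1,1)
          have h := K.add_mem (K.add_mem (K.nsmul_mem hw 2) hσw) h111
          have e : (2 : ℕ) • ((0, 2, 2) : ZMod 3 × ZMod 3 × ZMod 3) + (2, 2, 0) + (1, 1, 1)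
              = (0, 1, 2) := by decide
          rwa [e] at h
      -- subtract the diagonal part
      have hdx : ((x.1, x.1, x.1) : ZMod 3 × ZMod 3 × ZMod 3) ∈ K := by
        have e : ((x.1, x.1, x.1) : ZMod 3 × ZMod 3 × ZMod 3) =
            x.1.val • (((1 : ZMod 3), (1 : ZMod 3), (1 : ZMod 3)) : ZMod 3 × ZMod 3 × ZMod 3) := by
          have h' : ∀ a : ZMod 3, ((a, a, a) : ZMod 3 × ZMod 3 × ZMod 3) =
              a.val • (((1 : ZMod 3), (1 : ZMod 3), (1 : ZMod 3)) : ZMod 3 × ZMod 3 × ZMod 3) := by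
            decide
          exact h' x.1
        rw [e]; exact AddSubgroup.nsmul_mem _ h111 _
      have hw : ((0, x.2.1 - x.1, x.2.2 - x.1) : ZMod 3 × ZMod 3 × ZMod 3) ∈ K := by
        have h := K.sub_mem hx hdx
        have e : x - ((x.1, x.1, x.1) : ZMod 3 × ZMod 3 × ZMod 3) =
            ((0, x.2.1 - x.1, x.2.2 - x.1) : ZMod 3 × ZMod 3 × ZMod 3) := by
          obtain ⟨a, b, c⟩ := x
          simp
        rwa [e] at h
      have hpne : x.2.1 - x.1 ≠ 0 := by
        intro h0
        rw [h0] at hw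
        have hq0 := h3 _ hw
        have e1 : x.2.1 = x.1 := sub_eq_zero.mp h0
        have e2 : x.2.2 = x.1 := sub_eq_zero.mp hq0
        exact hnd e1.symm (e1.trans e2.symm)
      have hqne : x.2.2 - x.1 ≠ 0 := by
        intro h0
        rw [h0] at hw
        exact hpne (h2 _ hw)
      have h012 := key _ _ hpne hqne hw
      -- the plane is contained in K
      have hple : tracePlane ≤ K := by
        intro y hy
        have hy0 : y.1 + y.2.1 + y.2.2 = 0 := hy
        have e : y = y.1.val • (((1 : ZMod 3), (1 : ZMod 3), (1 : ZMod 3)) : ZMod 3 × ZMod 3 × ZMod 3)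
            + (y.2.1 - y.1).val • (((0 : ZMod 3), (1 : ZMod 3), (2 : ZMod 3)) : ZMod 3 × ZMod 3 × ZMod 3) := by
          have : ∀ y : ZMod 3 × ZMod 3 × ZMod 3, y.1 + y.2.1 + y.2.2 = 0 →
              y = y.1.val • (((1 : ZMod 3), (1 : ZMod 3), (1 : ZMod 3)) : ZMod 3 × ZMod 3 × ZMod 3)
              + (y.2.1 - y.1).val • (((0 : ZMod 3), (1 : ZMod 3), (2 : ZMod 3)) : ZMod 3 × ZMod 3 × ZMod 3) := by
            decide
          exact this y hy0
        rw [e]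
        exact K.add_mem (K.nsmul_mem h111 _) (K.nsmul_mem h012 _)
      -- K is contained in the plane
      have hkle : K ≤ tracePlane := by
        intro y hy
        have hpl : ((y.1, y.2.1, -(y.1 + y.2.1)) : ZMod 3 × ZMod 3 × ZMod 3) ∈ tracePlane := by
          show y.1 + y.2.1 + -(y.1 + y.2.1) = 0
          ring
        have h := K.sub_mem hy (hple hpl)
        have e : y - ((y.1, y.2.1, -(y.1 + y.2.1)) : ZMod 3 × ZMod 3 × ZMod 3) =
            ((0, 0, y.1 + y.2.1 + y.2.2) : ZMod 3 × ZMod 3 × ZMod 3) := by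
          obtain ⟨a, b, c⟩ := y
          simp only [Prod.mk_sub_mk, Prod.mk.injEq]
          refine ⟨by ring, by ring, by ring⟩
        rw [e] at h
        exact h3 _ h
      exact le_antisymm hkle hple
  · -- (1,1,1) ∉ K : K is trivial
    left
    rw [AddSubgroup.eq_bot_iff_forall]
    intro x hx
    obtain ⟨a, b, c⟩ := x
    -- trace is zero
    have ht : a + b + c = 0 := by
      by_contra hne
      exact h111 (hdiag111 _ (hdiag _ hx) hne)
    -- helper: combination gives diagonal
    have hcomb : ∀ u : ZMod 3 × ZMod 3 × ZMod 3, u ∈ K → u.1 + u.2.1 + u.2.2 = 0 →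
        u.1 + 2 * u.2.1 = 0 := by
      intro u hu hu0
      have key : u + 2 • cycShift u =
          ((u.1 + 2 * u.2.1, u.1 + 2 * u.2.1, u.1 + 2 * u.2.1) : ZMod 3 × ZMod 3 × ZMod 3) := by
        have : ∀ a b c : ZMod 3, a + b + c = 0 → ((a, b, c) : ZMod 3 × ZMod 3 × ZMod 3)
            + 2 • cycShift (a, b, c) = (a + 2 * b, a + 2 * b, a + 2 * b) := by decide
        obtain ⟨a', b', c'⟩ := u
        exact this a' b' c' hu0
      have hm := K.add_mem hu (K.nsmul_mem (hσ1 u hu) 2)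
      rw [key] at hm
      by_contra hne
      exact h111 (hdiag111 _ hm hne)
    have e1 : a + 2 * b = 0 := hcomb (a, b, c) hx ht
    have e2 : b + 2 * c = 0 := by
      have h := hcomb (b, c, a) (hσ1 _ hx) (by linear_combination ht)
      exact h
    have hab : a = b ∧ b = c := by
      have h' : ∀ a b c : ZMod 3, a + 2 * b = 0 → b + 2 * c = 0 → a = b ∧ b = c := by decide
      exact h' a b c e1 e2
    obtain ⟨hab, hbc⟩ := hab
    subst hab
    subst hbc
    have ha0 : a = 0 := by
      by_contra hne
      exact h111 (hdiag111 _ hx hne)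
    rw [ha0]
    rfl
end
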